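/- arXiv:1804.11305 — 2 statements merged into one kernel-verified Lean document; each statement's English description precedes it below -/
import Mathlib

section
/- Let θ > 0 and γ > 0 be real numbers with θ < 2^(−γ), and let R₀ > 0, C > 0. Let L : (R₀, +∞) → ℝ be a nonnegative, nondecreasing function and let g : (R₀, +∞) → ℝ be a nonnegative function with g(R) → 0 as R → +∞. Assume that for all R > R₀ one has L(R) ≤ θ·L(2R) + g(R) and L(R) ≤ C·R^γ. Then L(R) = 0 for all R > R₀. -/
open Filter

theorem weak_comparison_L_lemma
    (θ γ R₀ C : ℝ) (L g : ℝ → ℝ)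
    (hθ : 0 < θ) (hγ : 0 < γ) (hθγ : θ < (2 : ℝ) ^ (-γ))
    (hR₀ : 0 < R₀) (hC : 0 < C)
    (hLnonneg : ∀ R, R₀ < R → 0 ≤ L R)
    (hLmono : MonotoneOn L (Set.Ioi R₀))
    (hgnonneg : ∀ R, R₀ < R → 0 ≤ g R)
    (hg : Tendsto g atTop (nhds 0))
    (hrec : ∀ R, R₀ < R → L R ≤ θ * L (2 * R) + g R)
    (hgrowth : ∀ R, R₀ < R → L R ≤ C * R ^ γ) :
    ∀ R, R₀ < R → L R = 0 := by
  have h2γ : (0:ℝ) < (2:ℝ) ^ γ := Real.rpow_pos_of_pos two_pos γ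
  have hθ1 : θ < 1 :=
    lt_of_lt_of_le hθγ
      (Real.rpow_le_one_of_one_le_of_nonpos one_le_two (neg_nonpos.2 hγ.le))
  have hq : θ * (2:ℝ) ^ γ < 1 := by
    have h := mul_lt_mul_of_pos_right hθγ h2γ
    rwa [Real.rpow_neg (by norm_num : (0:ℝ) ≤ 2), inv_mul_cancel₀ (ne_of_gt h2γ)] at h
  have hqnn : 0 ≤ θ * (2:ℝ) ^ γ := le_of_lt (mul_pos hθ h2γ)
  intro R hR
  refine le_antisymm ?_ (hLnonneg R hR)
  have key : ∀ ε : ℝ, 0 < ε → L R ≤ 0 + ε := by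
    intro ε hε
    set δ := ε * (1 - θ) with hδdef
    have hδ : 0 < δ := mul_pos hε (by linarith)
    -- find S ≥ R with g small beyond S
    have hev : ∀ᶠ x in atTop, g x < δ := hg.eventually_lt_const hδ
    obtain ⟨M, hM⟩ := eventually_atTop.1 hev
    set S := max M R with hSdef
    have hSR : R ≤ S := le_max_right _ _
    have hS : R₀ < S := lt_of_lt_of_le hR hSR
    have hS0 : 0 < S := lt_trans hR₀ hS
    have hgS : ∀ T : ℝ, S ≤ T → g T < δ := fun T hT => hM T (le_trans (le_max_left _ _) hT)
    -- S ≤ 2^n * S and R₀ < 2^n * S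
    have hpow : ∀ n : ℕ, S ≤ 2 ^ n * S := by
      intro n
      nlinarith [hS0, (one_le_pow₀ (one_le_two : (1:ℝ) ≤ 2) : (1:ℝ) ≤ 2 ^ n)]
    have hpowR₀ : ∀ n : ℕ, R₀ < 2 ^ n * S := fun n => lt_of_lt_of_le hS (hpow n)
    -- iterate the recursion
    have iter : ∀ n : ℕ, L S ≤ θ ^ n * L (2 ^ n * S) + δ * ∑ k ∈ Finset.range n, θ ^ k := by
      intro n
      induction n with
      | zero => simp
      | succ n ih =>
        have hrecn := hrec (2 ^ n * S) (hpowR₀ n)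
        have hgn : g (2 ^ n * S) ≤ δ := le_of_lt (hgS _ (hpow n))
        have h2 : (2:ℝ) * (2 ^ n * S) = 2 ^ (n + 1) * S := by ring
        have hLn : L (2 ^ n * S) ≤ θ * L (2 ^ (n + 1) * S) + δ := by
          calc L (2 ^ n * S) ≤ θ * L (2 * (2 ^ n * S)) + g (2 ^ n * S) := hrecn
            _ ≤ θ * L (2 ^ (n + 1) * S) + δ := by rw [h2]; linarith
        have hθn : (0:ℝ) ≤ θ ^ n := pow_nonneg hθ.le n
        calc L S ≤ θ ^ n * L (2 ^ n * S) + δ * ∑ k ∈ Finset.range n, θ ^ k := ih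
          _ ≤ θ ^ n * (θ * L (2 ^ (n + 1) * S) + δ) + δ * ∑ k ∈ Finset.range n, θ ^ k :=
              by nlinarith [mul_le_mul_of_nonneg_left hLn hθn]
          _ = θ ^ (n + 1) * L (2 ^ (n + 1) * S) + δ * ∑ k ∈ Finset.range (n + 1), θ ^ k := by
              rw [Finset.sum_range_succ]; ring
    -- geometric sum bound
    have hsum : ∀ n : ℕ, ∑ k ∈ Finset.range n, θ ^ k ≤ (1 - θ)⁻¹ := fun n =>
      sum_le_hasSum _ (fun i _ => pow_nonneg hθ.le i) (hasSum_geometric_of_lt_one hθ.le hθ1)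
    -- growth bound: θ^n * L(2^n S) ≤ C * S^γ * (θ * 2^γ)^n
    have bound : ∀ n : ℕ, L S ≤ C * S ^ γ * (θ * (2:ℝ) ^ γ) ^ n + δ * (1 - θ)⁻¹ := by
      intro n
      have h1 : L (2 ^ n * S) ≤ C * (2 ^ n * S) ^ γ := hgrowth _ (hpowR₀ n)
      have h2n : (0:ℝ) ≤ (2:ℝ) ^ n := pow_nonneg (by norm_num) n
      have hrw : ((2:ℝ) ^ n * S) ^ γ = ((2:ℝ) ^ γ) ^ n * S ^ γ := by
        rw [Real.mul_rpow h2n hS0.le, ← Real.rpow_natCast (2:ℝ) n,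
          ← Real.rpow_natCast ((2:ℝ) ^ γ) n, ← Real.rpow_mul (by norm_num : (0:ℝ) ≤ 2),
          ← Real.rpow_mul (by norm_num : (0:ℝ) ≤ 2), mul_comm (n:ℝ) γ]
      have hθn : (0:ℝ) ≤ θ ^ n := pow_nonneg hθ.le n
      have hδnn : 0 ≤ δ := hδ.le
      have := iter n
      have h3 : θ ^ n * L (2 ^ n * S) ≤ C * S ^ γ * (θ * (2:ℝ) ^ γ) ^ n := by
        calc θ ^ n * L (2 ^ n * S) ≤ θ ^ n * (C * (2 ^ n * S) ^ γ) :=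
              mul_le_mul_of_nonneg_left h1 hθn
          _ = C * S ^ γ * (θ * (2:ℝ) ^ γ) ^ n := by rw [hrw, mul_pow]; ring
      have h4 : δ * ∑ k ∈ Finset.range n, θ ^ k ≤ δ * (1 - θ)⁻¹ :=
        mul_le_mul_of_nonneg_left (hsum n) hδnn
      linarith
    -- take the limit n → ∞
    have hlim : Tendsto (fun n : ℕ => C * S ^ γ * (θ * (2:ℝ) ^ γ) ^ n + δ * (1 - θ)⁻¹)
        atTop (nhds (C * S ^ γ * 0 + δ * (1 - θ)⁻¹)) :=
      (((tendsto_pow_atTop_nhds_zero_of_lt_one hqnn hq).const_mul _).add_const _)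
    have hLS : L S ≤ C * S ^ γ * 0 + δ * (1 - θ)⁻¹ := ge_of_tendsto' hlim bound
    have hδε : δ * (1 - θ)⁻¹ = ε := by
      rw [hδdef, mul_assoc, mul_inv_cancel₀ (by linarith : (1:ℝ) - θ ≠ 0), mul_one]
    have hLRS : L R ≤ L S := hLmono (Set.mem_Ioi.2 hR) (Set.mem_Ioi.2 hS) hSR
    rw [hδε] at hLS
    simpa using hLRS.trans hLS
  exact le_of_forall_pos_le_add key
end

section
/- Let γ : ℝ → ℝ³ be the curve γ(x) = (sin x, cos x, arctan x), and define its curvature by κ(x) = ‖γ'(x) × γ''(x)‖ / ‖γ'(x)‖³, where × denotes the cross product in ℝ³. Then for every x ∈ ℝ one has 1/2 ≤ κ(x) and κ(x) < 1. -/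
/-!
With `a = arctan' = (1 + x²)⁻¹` and `b = arctan'' = -2x / (1 + x²)²`, the cross product of
`γ' = (cos, -sin, a)` and `γ'' = (-sin, -cos, b)` has squared norm `1 + a² + b²`, so
`κ² = (1 + a² + b²) / (1 + a²)³`. Since `0 < a² ≤ 1` and `b² ≤ a²` (by `2|x| ≤ 1 + x²`), this ratio
lies in `[1/4, 1)`.
-/

open Real WithLp

theorem HasDerivAt.piLp_toLp {𝕜 ι : Type*} [NontriviallyNormedField 𝕜] [Fintype ι]
    {E : ι → Type*} [∀ i, NormedAddCommGroup (E i)] [∀ i, NormedSpace 𝕜 (E i)]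
    (p : ENNReal) [Fact (1 ≤ p)] {F : 𝕜 → Π i, E i} {F' : Π i, E i} {x : 𝕜}
    (h : HasDerivAt F F' x) :
    HasDerivAt (fun t => WithLp.toLp p (F t)) (WithLp.toLp p F') x :=
  (PiLp.hasFDerivAt_toLp p (F x)).comp_hasDerivAt x h

theorem HasDerivAt.euclideanSpace_vec3 {f g h : ℝ → ℝ} {f' g' h' x : ℝ}
    (hf : HasDerivAt f f' x) (hg : HasDerivAt g g' x) (hh : HasDerivAt h h' x) :
    HasDerivAt (fun t => WithLp.toLp 2 ![f t, g t, h t]) (WithLp.toLp 2 ![f', g', h']) x := by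
  refine HasDerivAt.piLp_toLp 2 (hasDerivAt_pi.2 fun i => ?_)
  fin_cases i <;> assumption

theorem EuclideanSpace.norm_toLp_vec3 (a b c : ℝ) :
    ‖toLp 2 ![a, b, c]‖ = √(a ^ 2 + b ^ 2 + c ^ 2) := by
  simp [EuclideanSpace.norm_eq, Fin.sum_univ_three]

theorem crossProduct_cos_sin (x a b : ℝ) :
    crossProduct ![cos x, -sin x, a] ![-sin x, -cos x, b] =
      ![-sin x * b + a * cos x, -a * sin x - cos x * b, -1] := by
  ext i
  fin_cases i <;> simp [cross_apply]
  linear_combination -sin_sq_add_cos_sq x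

theorem norm_crossProduct_cos_sin_div_norm_pow_three (x a b : ℝ) :
    ‖toLp 2 (crossProduct ![cos x, -sin x, a] ![-sin x, -cos x, b])‖ /
        ‖toLp 2 ![cos x, -sin x, a]‖ ^ 3 = √((1 + a ^ 2 + b ^ 2) / (1 + a ^ 2) ^ 3) := by
  have h_cross : (-sin x * b + a * cos x) ^ 2 + (-a * sin x - cos x * b) ^ 2 + (-1) ^ 2
      = 1 + a ^ 2 + b ^ 2 := by linear_combination (a ^ 2 + b ^ 2) * sin_sq_add_cos_sq x
  have h_tangent : cos x ^ 2 + (-sin x) ^ 2 + a ^ 2 = 1 + a ^ 2 := by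
    linear_combination cos_sq_add_sin_sq x
  have h_sqrt_cube : √((1 + a ^ 2) ^ 3) = √(1 + a ^ 2) ^ 3 := by
    rw [sqrt_eq_iff_eq_sq (by positivity) (by positivity), ← pow_mul, mul_comm, pow_mul,
      sq_sqrt (by positivity)]
  rw [crossProduct_cos_sin, EuclideanSpace.norm_toLp_vec3, EuclideanSpace.norm_toLp_vec3,
    h_cross, h_tangent, sqrt_div' _ (by positivity), h_sqrt_cube]

theorem one_fourth_le_div_one_add_pow_three_and_lt_one {t s : ℝ} (ht : 0 < t) (ht1 : t ≤ 1)
    (hs : 0 ≤ s) (hst : s ≤ t) :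
    1 / 4 ≤ (1 + t + s) / (1 + t) ^ 3 ∧ (1 + t + s) / (1 + t) ^ 3 < 1 := by
  have hpos : 0 < (1 + t) ^ 3 := by positivity
  constructor
  · rw [le_div_iff₀ hpos]
    nlinarith [mul_le_mul_of_nonneg_left ht1 (sq_nonneg t)]
  · rw [div_lt_one hpos]
    nlinarith [pow_pos ht 3]

theorem hasDerivAt_inv_one_add_sq (x : ℝ) :
    HasDerivAt (fun t : ℝ => (1 + t ^ 2)⁻¹) (-(2 * x) / (1 + x ^ 2) ^ 2) x := by
  simpa using ((hasDerivAt_pow 2 x).const_add 1).fun_inv (by positivity)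

theorem sq_neg_two_mul_div_sq_le_sq_inv (x : ℝ) :
    (-(2 * x) / (1 + x ^ 2) ^ 2) ^ 2 ≤ ((1 + x ^ 2)⁻¹) ^ 2 := by
  rw [div_pow, inv_pow, div_le_iff₀ (by positivity)]
  field_simp
  nlinarith [sq_nonneg (1 - x ^ 2), sq_nonneg x]

theorem spiral_curvature_bounds
    (γ : ℝ → EuclideanSpace ℝ (Fin 3))
    (hγ : ∀ x, γ x = (WithLp.equiv 2 (Fin 3 → ℝ)).symm
      ![Real.sin x, Real.cos x, Real.arctan x])
    (κ : ℝ → ℝ)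
    (hκ : ∀ x, κ x = ‖(WithLp.equiv 2 (Fin 3 → ℝ)).symm
        (crossProduct (WithLp.equiv 2 (Fin 3 → ℝ) (deriv γ x))
          (WithLp.equiv 2 (Fin 3 → ℝ) (deriv (deriv γ) x)))‖ / ‖deriv γ x‖ ^ 3) :
    ∀ x : ℝ, 1 / 2 ≤ κ x ∧ κ x < 1 := by
  have hγ' : deriv γ = fun t => toLp 2 ![cos t, -sin t, (1 + t ^ 2)⁻¹] := by
    rw [funext hγ]
    exact funext fun t => ((hasDerivAt_sin t).euclideanSpace_vec3 (hasDerivAt_cos t)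
      (hasDerivAt_arctan' t)).deriv
  intro x
  have hγ'' : deriv (deriv γ) x = toLp 2 ![-sin x, -cos x, -(2 * x) / (1 + x ^ 2) ^ 2] := by
    rw [hγ']
    exact ((hasDerivAt_cos x).euclideanSpace_vec3 (hasDerivAt_sin x).neg
      (hasDerivAt_inv_one_add_sq x)).deriv
  have hκx : κ x = √((1 + ((1 + x ^ 2)⁻¹) ^ 2 + (-(2 * x) / (1 + x ^ 2) ^ 2) ^ 2) /
      (1 + ((1 + x ^ 2)⁻¹) ^ 2) ^ 3) := by
    rw [hκ, hγ'', hγ']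
    exact norm_crossProduct_cos_sin_div_norm_pow_three x _ _
  obtain ⟨h_lower, h_upper⟩ := one_fourth_le_div_one_add_pow_three_and_lt_one (by positivity)
    (pow_le_one₀ (by positivity) (inv_le_one_of_one_le₀ (le_add_of_nonneg_right (sq_nonneg x))))
    (sq_nonneg _) (sq_neg_two_mul_div_sq_le_sq_inv x)
  rw [hκx, le_sqrt' (by norm_num), sqrt_lt' one_pos]
  constructor <;> linarith
end
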